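/- (Multi-covariate extension of Proposition 1.) Let there be n units with treatment responses Z_i ∈ ℝ and design vectors x_i ∈ ℝ^p, and suppose there is a coordinate j_0 with x_{i j_0} = 1 for all i (an intercept column). Let θ̂ be a local maximum of the logistic log-likelihood ℓ(θ) = ∑_{i=1}^n [Z_i (θᵀx_i) − log(1 + exp(θᵀx_i))], and set ê_i = exp(θ̂ᵀx_i)/(1 + exp(θ̂ᵀx_i)). If ∑_i Z_i(1 − ê_i) ≠ 0 and ∑_i (1 − Z_i) ê_i ≠ 0, then for every coordinate j, the overlap weights exactly balance the j-th predictor column: [∑_i x_{ij} Z_i(1 − ê_i)] / [∑_i Z_i(1 − ê_i)] = [∑_i x_{ij} (1 − Z_i) ê_i] / [∑_i (1 − Z_i) ê_i]. -/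

import Mathlib

/-!
At an interior local maximum the gradient of the logistic log-likelihood vanishes, giving the
score equations `∑ᵢ (Zᵢ - êᵢ) xᵢⱼ = 0` for every column `j`. Since
`Zᵢ (1 - êᵢ) - (1 - Zᵢ) êᵢ = Zᵢ - êᵢ`, the `j`-th score equation says that the overlap-weighted
sums of column `j` over treated and over control units agree; for the intercept column these
are the two normalising constants, so the weighted means agree as well.
-/

open Finset Real

theorem hasDerivAt_log_one_add_exp (a : ℝ) :
    HasDerivAt (fun t => log (1 + exp t)) (exp a / (1 + exp a)) a :=
  ((hasDerivAt_exp a).const_add 1).log (by positivity)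

namespace Logistic

variable {ι κ : Type*} [Fintype ι] [Fintype κ]

noncomputable def logLik (x : ι → κ → ℝ) (Z : ι → ℝ) (θ : κ → ℝ) : ℝ :=
  ∑ i, (Z i * (∑ j, θ j * x i j) - log (1 + exp (∑ j, θ j * x i j)))

noncomputable def propensity (x : ι → κ → ℝ) (θ : κ → ℝ) (i : ι) : ℝ :=
  exp (∑ j, θ j * x i j) / (1 + exp (∑ j, θ j * x i j))

theorem hasLineDerivAt_logLik (x : ι → κ → ℝ) (Z : ι → ℝ) (θ v : κ → ℝ) :
    HasLineDerivAt ℝ (logLik x Z)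
      (∑ i, (Z i - propensity x θ i) * ∑ j, v j * x i j) θ v := by
  unfold HasLineDerivAt logLik
  refine HasDerivAt.fun_sum fun i _ => ?_
  have hlin : HasDerivAt (fun t : ℝ => ∑ j, (θ + t • v) j * x i j) (∑ j, v j * x i j) 0 := by
    refine HasDerivAt.fun_sum fun j _ => ?_
    simpa using (((hasDerivAt_id (0 : ℝ)).mul_const (v j)).const_add (θ j)).mul_const (x i j)
  have hsoft := (hasDerivAt_log_one_add_exp (∑ j, θ j * x i j)).comp_of_eq 0 hlin (by simp)
  refine ((hlin.const_mul (Z i)).fun_sub hsoft).congr_deriv ?_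
  rw [propensity.eq_def, sub_mul]

theorem score_eq_zero_of_isLocalMax [DecidableEq κ] {x : ι → κ → ℝ} {Z : ι → ℝ} {θ : κ → ℝ}
    (hmax : IsLocalMax (logLik x Z) θ) (j : κ) :
    ∑ i, (Z i - propensity x θ i) * x i j = 0 := by
  simpa [Pi.single_apply] using
    hmax.hasLineDerivAt_eq_zero (hasLineDerivAt_logLik x Z θ (Pi.single j 1))

end Logistic

theorem overlap_weighted_sums_eq_of_score_eq_zero {ι : Type*} [Fintype ι] {c Z e : ι → ℝ}
    (h : ∑ i, (Z i - e i) * c i = 0) :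
    ∑ i, c i * Z i * (1 - e i) = ∑ i, c i * (1 - Z i) * e i := by
  rw [← sub_eq_zero, ← sum_sub_distrib, ← h]
  exact sum_congr rfl fun i _ => by ring

theorem overlap_weights_exact_balance_all_predictors_general
    (n p : ℕ)
    (x : Fin n → Fin p → ℝ) (Z : Fin n → ℝ)
    (j₀ : Fin p) (hintercept : ∀ i, x i j₀ = 1)
    (ℓ : (Fin p → ℝ) → ℝ)
    (hℓ : ℓ = fun θ => ∑ i, (Z i * (∑ j, θ j * x i j)
        - Real.log (1 + Real.exp (∑ j, θ j * x i j))))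
    (θhat : Fin p → ℝ) (hmax : IsLocalMax ℓ θhat)
    (ehat : Fin n → ℝ)
    (hehat : ehat = fun i =>
        Real.exp (∑ j, θhat j * x i j) / (1 + Real.exp (∑ j, θhat j * x i j))) :
    ∀ j : Fin p,
      (∑ i, x i j * Z i * (1 - ehat i)) / (∑ i, Z i * (1 - ehat i)) =
        (∑ i, x i j * (1 - Z i) * ehat i) / (∑ i, (1 - Z i) * ehat i) := by
  obtain rfl : ℓ = Logistic.logLik x Z := hℓ
  obtain rfl : ehat = Logistic.propensity x θhat := hehat
  have balance (j : Fin p) :=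
    overlap_weighted_sums_eq_of_score_eq_zero (Logistic.score_eq_zero_of_isLocalMax hmax j)
  intro j
  have normalisers_eq := balance j₀
  simp only [hintercept, one_mul] at normalisers_eq
  rw [balance j, normalisers_eq]

/-- Multi-covariate extension of Proposition 1: if the design includes an
intercept column and `θ̂` is a local maximum of the logistic log-likelihood,
then the overlap weights built from the fitted propensities
`ê_i = exp(θ̂ᵀx_i)/(1 + exp(θ̂ᵀx_i))` exactly balance every predictor column
between the treatment and control groups. -/
theorem overlap_weights_exact_balance_all_predictors
    (n p : ℕ) (hn : 0 < n) (hp : 0 < p)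
    (x : Fin n → Fin p → ℝ) (Z : Fin n → ℝ)
    (j₀ : Fin p) (hintercept : ∀ i, x i j₀ = 1)
    (ℓ : (Fin p → ℝ) → ℝ)
    (hℓ : ℓ = fun θ => ∑ i, (Z i * (∑ j, θ j * x i j)
        - Real.log (1 + Real.exp (∑ j, θ j * x i j))))
    (θhat : Fin p → ℝ) (hmax : IsLocalMax ℓ θhat)
    (ehat : Fin n → ℝ)
    (hehat : ehat = fun i =>
        Real.exp (∑ j, θhat j * x i j) / (1 + Real.exp (∑ j, θhat j * x i j)))
    (hd1 : ∑ i, Z i * (1 - ehat i) ≠ 0)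
    (hd0 : ∑ i, (1 - Z i) * ehat i ≠ 0) :
    ∀ j : Fin p,
      (∑ i, x i j * Z i * (1 - ehat i)) / (∑ i, Z i * (1 - ehat i)) =
        (∑ i, x i j * (1 - Z i) * ehat i) / (∑ i, (1 - Z i) * ehat i) :=
  overlap_weights_exact_balance_all_predictors_general n p x Z j₀ hintercept ℓ hℓ θhat hmax ehat
    hehat
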